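/- Key identity for the monotonicity proof: assume each x_i = (1, z_iᵀ)ᵀ, X has full rank m ≥ 2, w ∈ Ω with M(w) = XᵀΔ_w X positive definite, and w' ∈ Ω is the Algorithm II update of w, i.e. w'_i = w_i·(x_iᵀ M(w)^{-1} x_i − 1)/(m − 1). Let Q = (XᵀΔ_w X)^{-1}XᵀΔ_w, K = (0_{m−1}, I_{m−1}), and ψ'(Σ) = Kᵀ(KΣKᵀ)^{-1}K. Then tr(ψ'(M(w)^{-1}) · Q Δ_{w'}^{-1} Qᵀ) = tr(ψ'(M(w)^{-1}) · Q Δ_w^{-1} Qᵀ). -/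

import Mathlib

open Matrix Filter

/-- The information matrix `M(w) = ∑ i, w_i x_i x_iᵀ`. -/
noncomputable def Mmat {n m : ℕ} (x : Fin n → Fin m → ℝ) (w : Fin n → ℝ) :
    Matrix (Fin m) (Fin m) ℝ :=
  ∑ i, w i • Matrix.vecMulVec (x i) (x i)

/-- The `(m−1) × m` matrix `K = (0_{m−1}, I_{m−1})`: a zero first column followed by the
identity. -/
def Kmat (m : ℕ) : Matrix (Fin (m - 1)) (Fin m) ℝ :=
  Matrix.of fun i j => if (j : ℕ) = (i : ℕ) + 1 then 1 else 0

/-- The gradient `ψ'(Σ) = Kᵀ (K Σ Kᵀ)⁻¹ K` of `ψ(M) = log det (K M Kᵀ)` at `Σ`. -/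
noncomputable def psiK' {m : ℕ} (Sig : Matrix (Fin m) (Fin m) ℝ) :
    Matrix (Fin m) (Fin m) ℝ :=
  (Kmat m)ᵀ * (Kmat m * Sig * (Kmat m)ᵀ)⁻¹ * Kmat m

/-
Write `M = M(w)` and `dᵢ = xᵢᵀ M⁻¹ xᵢ`. Since `M₀₀ = ∑ wᵢ = 1`, inverting the block `K M⁻¹ Kᵀ` of
`M⁻¹` gives the Schur complement of `M₀₀`, so `ψ'(M⁻¹) = S := M − (M e₀)(M e₀)ᵀ`, and
`M⁻¹ S M⁻¹ = M⁻¹ − e₀ e₀ᵀ`. As `Q Δ_u⁻¹ Qᵀ = M⁻¹ M(w²/u) M⁻¹`, both traces have the form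
`∑ᵢ (wᵢ²/uᵢ)(dᵢ − 1)`. For `u = w'` the update rule makes each term `(m − 1) wᵢ`; for `u = w`
the sum is `∑ wᵢ dᵢ − 1 = tr(M M⁻¹) − 1`. Both equal `m − 1`.
-/

section Kmat

variable {m : ℕ}

theorem Kmat_mul_transpose_Kmat : Kmat m * (Kmat m)ᵀ = 1 := by
  ext i i'
  rw [Matrix.mul_apply, Finset.sum_eq_single ⟨i + 1, by omega⟩]
  · simp [Kmat, Matrix.one_apply, Fin.ext_iff]
  · intro j _ hj
    simp [Kmat, Fin.ext_iff] at hj ⊢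
    simp [hj]
  · simp

theorem Kmat_mulVec_single_zero [NeZero m] : Kmat m *ᵥ Pi.single 0 1 = 0 := by
  ext i
  simp [Kmat]

theorem transpose_Kmat_mul_Kmat [NeZero m] :
    (Kmat m)ᵀ * Kmat m = 1 - vecMulVec (Pi.single 0 1) (Pi.single 0 1) := by
  ext j k
  rw [Matrix.mul_apply]
  by_cases hj : (j : ℕ) = 0
  · rw [Finset.sum_eq_zero fun i _ => by simp [Kmat, hj]]
    obtain rfl : j = 0 := Fin.ext hj
    simp [Matrix.one_apply, vecMulVec_apply, Pi.single_apply, eq_comm]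
  · have hj0 : j ≠ 0 := fun h => hj (by simp [h])
    rw [Finset.sum_eq_single ⟨j - 1, by omega⟩]
    · rw [Matrix.sub_apply, one_apply, vecMulVec_apply, Pi.single_eq_of_ne hj0, zero_mul, sub_zero]
      simp [Kmat, Nat.sub_add_cancel (Nat.pos_of_ne_zero hj), Fin.ext_iff, eq_comm]
    · intro i _ hi
      simp [Kmat, Fin.ext_iff] at hi ⊢
      omega
    · simp

theorem transpose_Kmat_mul_Kmat_mul [NeZero m] {N : Matrix (Fin m) (Fin m) ℝ}
    (hN : N.row 0 = 0) : (Kmat m)ᵀ * Kmat m * N = N := by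
  rw [transpose_Kmat_mul_Kmat, Matrix.sub_mul, Matrix.one_mul, vecMulVec_mul,
    single_one_vecMul, hN, vecMulVec_zero, sub_zero]

theorem mul_transpose_Kmat_mul_Kmat [NeZero m] {N : Matrix (Fin m) (Fin m) ℝ}
    (hN : N.col 0 = 0) : N * ((Kmat m)ᵀ * Kmat m) = N := by
  rw [transpose_Kmat_mul_Kmat, Matrix.mul_sub, Matrix.mul_one, mul_vecMulVec,
    mulVec_single_one, hN, zero_vecMulVec, sub_zero]

end Kmat

section Schur

variable {𝕜 : Type*} [Field 𝕜] {m : ℕ} [NeZero m]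

noncomputable def schurComplementZero (M : Matrix (Fin m) (Fin m) 𝕜) : Matrix (Fin m) (Fin m) 𝕜 :=
  M - (M 0 0)⁻¹ • vecMulVec (M.col 0) (M.row 0)

variable {M : Matrix (Fin m) (Fin m) 𝕜}

theorem row_schurComplementZero (h : M 0 0 ≠ 0) : (schurComplementZero M).row 0 = 0 := by
  ext j
  simp [schurComplementZero, vecMulVec_apply, inv_mul_cancel_left₀ h]

theorem col_schurComplementZero (h : M 0 0 ≠ 0) : (schurComplementZero M).col 0 = 0 := by
  ext i
  simp [schurComplementZero, vecMulVec_apply, mul_left_comm _ (M i 0), inv_mul_cancel₀ h]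

theorem inv_mul_schurComplementZero (hM : IsUnit M.det) :
    M⁻¹ * schurComplementZero M = 1 - (M 0 0)⁻¹ • vecMulVec (Pi.single 0 1) (M.row 0) := by
  rw [schurComplementZero, Matrix.mul_sub, nonsing_inv_mul M hM, Matrix.mul_smul, mul_vecMulVec,
    ← mulVec_single_one, mulVec_mulVec, nonsing_inv_mul M hM, one_mulVec]

theorem inv_mul_schurComplementZero_mul_inv (hM : IsUnit M.det) :
    M⁻¹ * schurComplementZero M * M⁻¹
      = M⁻¹ - (M 0 0)⁻¹ • vecMulVec (Pi.single 0 1) (Pi.single 0 1) := by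
  rw [inv_mul_schurComplementZero hM, Matrix.sub_mul, Matrix.one_mul, Matrix.smul_mul,
    vecMulVec_mul, ← single_one_vecMul, vecMul_vecMul, mul_nonsing_inv M hM, vecMul_one]

theorem dotProduct_inv_mul_schurComplementZero_mul_inv_mulVec (hM : IsUnit M.det)
    (v : Fin m → 𝕜) :
    v ⬝ᵥ (M⁻¹ * schurComplementZero M * M⁻¹) *ᵥ v = v ⬝ᵥ M⁻¹ *ᵥ v - (M 0 0)⁻¹ * v 0 ^ 2 := by
  rw [inv_mul_schurComplementZero_mul_inv hM, sub_mulVec, dotProduct_sub, smul_mulVec,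
    dotProduct_smul, vecMulVec_mulVec]
  simp [sq]

end Schur

theorem psiK'_inv {m : ℕ} [NeZero m] {M : Matrix (Fin m) (Fin m) ℝ} (hM : IsUnit M.det)
    (h : M 0 0 ≠ 0) : psiK' M⁻¹ = schurComplementZero M := by
  unfold psiK'
  set K := Kmat m
  set S := schurComplementZero M
  have hSinv : (K * M⁻¹ * Kᵀ)⁻¹ = K * S * Kᵀ := by
    refine inv_eq_right_inv ?_
    calc K * M⁻¹ * Kᵀ * (K * S * Kᵀ) = K * (M⁻¹ * (Kᵀ * K * S)) * Kᵀ := by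
          simp only [Matrix.mul_assoc]
      _ = K * Kᵀ := by
          rw [transpose_Kmat_mul_Kmat_mul (row_schurComplementZero h),
            inv_mul_schurComplementZero hM, Matrix.mul_sub, Matrix.mul_one, Matrix.mul_smul,
            mul_vecMulVec, Kmat_mulVec_single_zero, zero_vecMulVec, smul_zero, sub_zero]
      _ = 1 := Kmat_mul_transpose_Kmat
  calc Kᵀ * (K * M⁻¹ * Kᵀ)⁻¹ * K = Kᵀ * K * S * (Kᵀ * K) := by
        rw [hSinv]
        simp only [Matrix.mul_assoc]
    _ = S := by
        rw [transpose_Kmat_mul_Kmat_mul (row_schurComplementZero h),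
          mul_transpose_Kmat_mul_Kmat (col_schurComplementZero h)]

section Mmat

variable {n m : ℕ} (x : Fin n → Fin m → ℝ)

theorem transpose_mul_diagonal_mul_eq_Mmat (c : Fin n → ℝ) :
    (of x)ᵀ * diagonal c * of x = Mmat x c := by
  rw [Matrix.mul_assoc]
  ext j k
  rw [Matrix.mul_apply]
  simp [diagonal_mul, Mmat, vecMulVec_apply, Matrix.sum_apply, mul_comm, mul_left_comm]

theorem Mmat_transpose (c : Fin n → ℝ) : (Mmat x c)ᵀ = Mmat x c := by
  rw [← transpose_mul_diagonal_mul_eq_Mmat]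
  simp [Matrix.transpose_mul, Matrix.mul_assoc]

theorem trace_Mmat_mul (c : Fin n → ℝ) (B : Matrix (Fin m) (Fin m) ℝ) :
    (Mmat x c * B).trace = ∑ i, c i * (x i ⬝ᵥ B *ᵥ x i) := by
  simp only [Mmat, Finset.sum_mul, trace_sum, Matrix.smul_mul, trace_smul, vecMulVec_mul,
    trace_vecMulVec, smul_eq_mul, dotProduct_mulVec, dotProduct_comm (x _) (_ ᵥ* B)]

theorem trace_mul_mul_Mmat_mul (c : Fin n → ℝ) (A B C : Matrix (Fin m) (Fin m) ℝ) :
    (A * (B * Mmat x c * C)).trace = ∑ i, c i * (x i ⬝ᵥ (C * A * B) *ᵥ x i) := by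
  rw [← trace_Mmat_mul, show A * (B * Mmat x c * C) = A * B * (Mmat x c * C) by
    simp only [Matrix.mul_assoc], trace_mul_comm]
  simp only [Matrix.mul_assoc]

theorem lsq_mul_diagonal_inv_mul_transpose {w u : Fin n → ℝ} (hu : ∀ i, u i ≠ 0)
    {Q : Matrix (Fin m) (Fin n) ℝ}
    (hQ : Q = ((of x)ᵀ * diagonal w * of x)⁻¹ * (of x)ᵀ * diagonal w) :
    Q * (diagonal u)⁻¹ * Qᵀ
      = (Mmat x w)⁻¹ * Mmat x (fun i => w i ^ 2 / u i) * (Mmat x w)⁻¹ := by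
  have hdiag : diagonal w * (diagonal u)⁻¹ * diagonal w = diagonal fun i => w i ^ 2 / u i := by
    rw [inv_eq_right_inv (B := diagonal u⁻¹) (by simp [hu]), diagonal_mul_diagonal,
      diagonal_mul_diagonal]
    congr 1; ext i; simp; ring
  rw [hQ, transpose_mul_diagonal_mul_eq_Mmat, ← transpose_mul_diagonal_mul_eq_Mmat x
    (fun i => w i ^ 2 / u i), ← hdiag]
  simp only [Matrix.transpose_mul, diagonal_transpose, transpose_transpose, transpose_nonsing_inv,
    Mmat_transpose, Matrix.mul_assoc]

theorem Mmat_apply_zero_zero [NeZero m] {c : Fin n → ℝ} (hx : ∀ i, x i 0 = 1) :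
    Mmat x c 0 0 = ∑ i, c i := by
  simp [Mmat, Matrix.sum_apply, vecMulVec_apply, hx]

end Mmat

/-- Key identity for the monotonicity proof: with `Q = (Xᵀ Δ_w X)⁻¹ Xᵀ Δ_w` the weighted
least squares matrix and `w'` the Algorithm II update of `w`,
`tr(ψ'(M(w)⁻¹) Q Δ_{w'}⁻¹ Qᵀ) = tr(ψ'(M(w)⁻¹) Q Δ_w⁻¹ Qᵀ)`. -/
theorem stmt_12 {n m : ℕ} (hm : 2 ≤ m)
    (x : Fin n → Fin m → ℝ)
    (hx1 : ∀ i, x i ⟨0, by omega⟩ = 1)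
    (w : Fin n → ℝ) (hw0 : ∀ i, 0 < w i) (hw1 : ∑ i, w i = 1)
    (hM : (Mmat x w).PosDef)
    (w' : Fin n → ℝ) (hw'0 : ∀ i, 0 < w' i)
    (hupd : ∀ i, w' i = w i * ((x i ⬝ᵥ (Mmat x w)⁻¹ *ᵥ x i) - 1) / ((m : ℝ) - 1))
    (Q : Matrix (Fin m) (Fin n) ℝ)
    (hQ : Q = ((Matrix.of x)ᵀ * Matrix.diagonal w * Matrix.of x)⁻¹ *
      (Matrix.of x)ᵀ * Matrix.diagonal w) :
    (psiK' ((Mmat x w)⁻¹) * (Q * (Matrix.diagonal w')⁻¹ * Qᵀ)).trace =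
      (psiK' ((Mmat x w)⁻¹) * (Q * (Matrix.diagonal w)⁻¹ * Qᵀ)).trace := by
  have : NeZero m := ⟨by omega⟩
  have hx0 : ∀ i, x i 0 = 1 := hx1
  have hdet : IsUnit (Mmat x w).det := hM.isUnit.map detMonoidHom
  have h00 : Mmat x w 0 0 = 1 := by rw [Mmat_apply_zero_zero x hx0, hw1]
  set d := fun i => x i ⬝ᵥ (Mmat x w)⁻¹ *ᵥ x i
  have htrace : ∀ c, (psiK' (Mmat x w)⁻¹ * ((Mmat x w)⁻¹ * Mmat x c * (Mmat x w)⁻¹)).trace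
      = ∑ i, c i * (d i - 1) := by
    intro c
    simp only [psiK'_inv hdet (by simp [h00]), trace_mul_mul_Mmat_mul,
      dotProduct_inv_mul_schurComplementZero_mul_inv_mulVec hdet, h00, hx0, d]
    simp
  have hm1 : (m : ℝ) - 1 ≠ 0 := by
    have : (2 : ℝ) ≤ m := by exact_mod_cast hm
    linarith
  have hterm_update : ∀ i, w i ^ 2 / w' i * (d i - 1) = ((m : ℝ) - 1) * w i := by
    intro i
    have hw'i : w' i = w i * (d i - 1) / (m - 1) := hupd i
    have hw'0i := (hw'0 i).ne'
    rw [hw'i] at hw'0i ⊢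
    obtain ⟨-, hd⟩ := mul_ne_zero_iff.mp (div_ne_zero_iff.mp hw'0i).1
    field_simp
  have hsum_wd : ∑ i, w i * d i = m := by
    rw [← trace_Mmat_mul, mul_nonsing_inv _ hdet, trace_one, Fintype.card_fin]
  rw [lsq_mul_diagonal_inv_mul_transpose x (fun i => (hw'0 i).ne') hQ,
    lsq_mul_diagonal_inv_mul_transpose x (fun i => (hw0 i).ne') hQ, htrace, htrace]
  calc ∑ i, w i ^ 2 / w' i * (d i - 1) = (m - 1) * ∑ i, w i := by
        rw [Finset.mul_sum]; exact Finset.sum_congr rfl fun i _ => hterm_update i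
    _ = ∑ i, w i * d i - ∑ i, w i := by rw [hsum_wd, hw1, mul_one]
    _ = ∑ i, w i ^ 2 / w i * (d i - 1) := by
        rw [← Finset.sum_sub_distrib]
        refine Finset.sum_congr rfl fun i _ => ?_
        rw [sq, mul_self_div_self]
        ring
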